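/- Let R be a positive definite real symmetric d×d matrix and let A be an invertible real d×d matrix. Then the angular central Gaussian distribution μ_{A R Aᵀ} equals the pushforward of μ_R under the map x ↦ A x / ‖A x‖ on the unit sphere S^{d−1}. -/

import Mathlib

/-! A linear change of variables `x ↦ A x` maps `N(0, R)` to `N(0, A R Aᵀ)`: the Jacobian factor
`|det A|⁻¹` is exactly absorbed by `√det (A R Aᵀ) = |det A| √det R`, and the quadratic form
transforms as `(A⁻¹ x)ᵀ R⁻¹ (A⁻¹ x) = xᵀ (A R Aᵀ)⁻¹ x`. Normalizing `x` before applying `A` is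
then invisible after the final normalization, since `A (x / ‖x‖)` is a positive multiple
of `A x`. -/

open MeasureTheory Matrix

/-- The centered Gaussian measure `N(0,S)` on `ℝ^d` (as `EuclideanSpace ℝ (Fin d)`). -/
noncomputable def gaussianE (d : ℕ) (S : Matrix (Fin d) (Fin d) ℝ) :
    Measure (EuclideanSpace ℝ (Fin d)) :=
  volume.withDensity fun x =>
    ENNReal.ofReal ((Real.sqrt ((2 * Real.pi) ^ d * S.det))⁻¹ *
      Real.exp (-(1 / 2) * ((fun i => x i) ⬝ᵥ S⁻¹.mulVec fun i => x i)))

/-- The normalization map `x ↦ x / ‖x‖`. -/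
noncomputable def normalizeSphere (d : ℕ) (x : EuclideanSpace ℝ (Fin d)) :
    EuclideanSpace ℝ (Fin d) := ‖x‖⁻¹ • x

/-- The angular central Gaussian distribution with scatter matrix `R`: the pushforward of
`N(0,R)` under `x ↦ x / ‖x‖`, viewed as a measure on the ambient space supported on the
unit sphere. -/
noncomputable def acg (d : ℕ) (R : Matrix (Fin d) (Fin d) ℝ) :
    Measure (EuclideanSpace ℝ (Fin d)) :=
  (gaussianE d R).map (normalizeSphere d)

open Real

lemma MeasurableEquiv.map_withDensity {α β : Type*} [MeasurableSpace α] [MeasurableSpace β]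
    (e : α ≃ᵐ β) (μ : Measure α) (f : α → ENNReal) :
    (μ.withDensity f).map e = (μ.map e).withDensity (f ∘ e.symm) := by
  ext s hs
  rw [e.map_apply, withDensity_apply _ (e.measurable hs), withDensity_apply _ hs, e.restrict_map,
    lintegral_map_equiv]
  simp

section Matrix

variable {n : Type*} [Fintype n] [DecidableEq n]

lemma Matrix.inv_mulVec_dotProduct_inv_conj {R : Type*} [CommRing R] (A S : Matrix n n R)
    (x : n → R) : A⁻¹ *ᵥ x ⬝ᵥ S⁻¹ *ᵥ (A⁻¹ *ᵥ x) = x ⬝ᵥ (A * S * Aᵀ)⁻¹ *ᵥ x := by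
  rw [mul_inv_rev, mul_inv_rev, ← transpose_nonsing_inv, ← mulVec_mulVec,
    dotProduct_mulVec _ A⁻¹ᵀ, vecMul_transpose, ← mulVec_mulVec, dotProduct_mulVec]

lemma Matrix.sqrt_mul_det_conj (c : ℝ) (A S : Matrix n n ℝ) :
    √(c * (A * S * Aᵀ).det) = |A.det| * √(c * S.det) := by
  rw [det_mul, det_mul, det_transpose,
    show c * (A.det * S.det * A.det) = A.det ^ 2 * (c * S.det) by ring,
    sqrt_mul (sq_nonneg _), sqrt_sq_eq_abs]

end Matrix

noncomputable def gaussianDensity (d : ℕ) (S : Matrix (Fin d) (Fin d) ℝ)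
    (x : EuclideanSpace ℝ (Fin d)) : ℝ :=
  (√((2 * π) ^ d * S.det))⁻¹ * exp (-(1 / 2) * ((fun i => x i) ⬝ᵥ S⁻¹ *ᵥ fun i => x i))

lemma gaussianE_eq_withDensity (d : ℕ) (S : Matrix (Fin d) (Fin d) ℝ) :
    gaussianE d S = volume.withDensity fun x => ENNReal.ofReal (gaussianDensity d S x) :=
  rfl

lemma gaussianDensity_conj (d : ℕ) (S A : Matrix (Fin d) (Fin d) ℝ)
    (x : EuclideanSpace ℝ (Fin d)) :
    |A.det|⁻¹ * gaussianDensity d S (toEuclideanLin A⁻¹ x) = gaussianDensity d (A * S * Aᵀ) x := by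
  simp only [gaussianDensity, ofLp_toLpLin, toLin'_apply, inv_mulVec_dotProduct_inv_conj,
    sqrt_mul_det_conj, mul_inv, ← mul_assoc]

theorem gaussianE_map_toEuclideanLin (d : ℕ) (S A : Matrix (Fin d) (Fin d) ℝ) (hA : IsUnit A) :
    (gaussianE d S).map (toEuclideanLin A) = gaussianE d (A * S * Aᵀ) := by
  have hdet : IsUnit A.det := (isUnit_iff_isUnit_det A).mp hA
  let e := (toLinearEquiv (EuclideanSpace.basisFun (Fin d) ℝ).toBasis A hdet)
    |>.toContinuousLinearEquiv.toHomeomorph.toMeasurableEquiv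
  have he_symm (x) : e.symm x = toEuclideanLin A⁻¹ x := rfl
  have hvol : volume.map e = ENNReal.ofReal |A.det|⁻¹ • volume := by
    have := Measure.map_linearMap_addHaar_eq_smul_addHaar (volume : Measure _)
      (f := toEuclideanLin A) (by rw [LinearMap.det_toLpLin]; exact hdet.ne_zero)
    rwa [LinearMap.det_toLpLin, abs_inv] at this
  change (gaussianE d S).map e = _
  rw [gaussianE_eq_withDensity, e.map_withDensity, hvol, withDensity_smul_measure,
    ← withDensity_smul' _ _ ENNReal.ofReal_ne_top, gaussianE_eq_withDensity]
  congr 1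
  funext x
  rw [Pi.smul_apply, smul_eq_mul, Function.comp_apply, he_symm,
    ← ENNReal.ofReal_mul (by positivity), gaussianDensity_conj]

lemma measurable_normalizeSphere (d : ℕ) : Measurable (normalizeSphere d) :=
  measurable_norm.inv.smul measurable_id

lemma normalizeSphere_smul_of_pos (d : ℕ) {c : ℝ} (hc : 0 < c) (x : EuclideanSpace ℝ (Fin d)) :
    normalizeSphere d (c • x) = normalizeSphere d x := by
  rw [normalizeSphere, normalizeSphere, norm_smul, norm_of_nonneg hc.le, mul_inv, smul_smul,
    mul_right_comm, inv_mul_cancel₀ hc.ne', one_mul]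

lemma normalizeSphere_map_normalizeSphere (d : ℕ)
    (f : EuclideanSpace ℝ (Fin d) →ₗ[ℝ] EuclideanSpace ℝ (Fin d)) (x : EuclideanSpace ℝ (Fin d)) :
    normalizeSphere d (f (normalizeSphere d x)) = normalizeSphere d (f x) := by
  rcases eq_or_ne x 0 with rfl | hx
  · simp [normalizeSphere]
  · rw [show normalizeSphere d x = ‖x‖⁻¹ • x from rfl, map_smul,
      normalizeSphere_smul_of_pos d (by positivity)]

theorem acg_conj_map_general (d : ℕ) (R A : Matrix (Fin d) (Fin d) ℝ)
    (hA : IsUnit A) :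
    acg d (A * R * Aᵀ) =
      (acg d R).map fun x => normalizeSphere d (Matrix.toEuclideanLin A x) := by
  have hA_meas : Measurable (toEuclideanLin A) :=
    (toEuclideanLin A).continuous_of_finiteDimensional.measurable
  have hN := measurable_normalizeSphere d
  rw [acg, acg, ← gaussianE_map_toEuclideanLin d R A hA, Measure.map_map hN hA_meas,
    Measure.map_map (g := fun x => normalizeSphere d (toEuclideanLin A x)) (hN.comp hA_meas) hN]
  congr 1
  funext x
  exact (normalizeSphere_map_normalizeSphere d _ x).symm

theorem acg_conj_map (d : ℕ) (R A : Matrix (Fin d) (Fin d) ℝ)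
    (hR : R.PosDef) (hA : IsUnit A) :
    acg d (A * R * Aᵀ) =
      (acg d R).map fun x => normalizeSphere d (Matrix.toEuclideanLin A x) :=
  acg_conj_map_general d R A hA
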